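/- arXiv:1701.01539 — 4 statements merged into one kernel-verified Lean document; each statement's English description precedes it below -/
import Mathlib

section
/- Swapping a replica between an unfilled light child and a heavier child strictly improves the failure aggregate: let T be a rooted tree with placement P, and suppose an internal node u has children c_i, c_j such that c_i is unfilled (f(c_i, P) < |C_{c_i}|) and f(c_i, P) + 1 < f(c_j, P). Let ℓ_i ∈ C_{c_i} \ P and ℓ_j ∈ C_{c_j} ∩ P, and set P* = (P \ {ℓ_j}) ∪ {ℓ_i}. Then f⃗(P*) <_L f⃗(P). Consequently, any placement that lexico-minimizes the failure aggregate is balanced. -/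
attribute [local instance] Classical.propDecidable

/-- `v` is a descendant of `u` in the rooted tree given by the `parent` map
(every vertex is a descendant of itself). -/
def isDesc {n : ℕ} (parent : Fin n → Fin n) (u v : Fin n) : Prop :=
  ∃ k : ℕ, parent^[k] v = u

/-- `v` is a leaf: no other vertex has `v` as its parent. -/
def isLeaf {n : ℕ} (parent : Fin n → Fin n) (v : Fin n) : Prop :=
  ∀ w, parent w = v → w = v

/-- The set of leaves of the tree. -/
noncomputable def leaves {n : ℕ} (parent : Fin n → Fin n) : Finset (Fin n) :=
  Finset.univ.filter (isLeaf parent)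

/-- The set `C_u` of leaf descendants of vertex `u`. -/
noncomputable def leafDesc {n : ℕ} (parent : Fin n → Fin n) (u : Fin n) : Finset (Fin n) :=
  Finset.univ.filter (fun v => isDesc parent u v ∧ isLeaf parent v)

/-- The failure number `f(u, P) = |P ∩ C_u|`. -/
noncomputable def fnum {n : ℕ} (parent : Fin n → Fin n) (u : Fin n) (P : Finset (Fin n)) : ℕ :=
  (P ∩ leafDesc parent u).card

/-- `c` is a child of `u`. -/
def isChild {n : ℕ} (parent : Fin n → Fin n) (c u : Fin n) : Prop :=
  parent c = u ∧ c ≠ u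

/-- The failure aggregate `f⃗(P) ∈ ℕ^{ρ+1}`: entry `i` counts the vertices with
failure number `ρ - i`. -/
noncomputable def fagg {n : ℕ} (parent : Fin n → Fin n) (ρ : ℕ) (P : Finset (Fin n)) :
    Fin (ρ + 1) → ℕ :=
  fun i => (Finset.univ.filter (fun v : Fin n => fnum parent v P = ρ - (i : ℕ))).card

/-- Lexicographic order on `ℕ`-vectors. -/
def lexLe {d : ℕ} (x y : Fin d → ℕ) : Prop :=
  x = y ∨ ∃ j : Fin d, x j < y j ∧ ∀ i : Fin d, i < j → x i = y i

/-- Strict lexicographic order on `ℕ`-vectors. -/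
def lexLt {d : ℕ} (x y : Fin d → ℕ) : Prop :=
  ∃ j : Fin d, x j < y j ∧ ∀ i : Fin d, i < j → x i = y i

/-- Node `u` is balanced w.r.t. `P`. -/
def balancedAt {n : ℕ} (parent : Fin n → Fin n) (u : Fin n) (P : Finset (Fin n)) : Prop :=
  ∀ ci cj : Fin n, isChild parent ci u → isChild parent cj u →
    fnum parent ci P < (leafDesc parent ci).card →
    fnum parent cj P ≤ fnum parent ci P + 1

/-!
Only the failure numbers of the ancestors of `ℓᵢ` and `ℓⱼ` can change under the swap. An ancestor
of `ℓᵢ` that is not an ancestor of `ℓⱼ` lies below `cᵢ`, so its failure number rises to at most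
`f(cᵢ, P) + 1 < f(cⱼ, P) =: b`; an ancestor of `ℓⱼ` only lies below `cⱼ`, so its failure number
drops from at most `b`. Hence the vertices with failure number above `b` are untouched, while
`cⱼ` leaves level `b` and nobody joins it: the aggregate drops at entry `ρ - b`. A lexicographic
minimum therefore admits no such swap, which is exactly balancedness.
-/

open Finset

section Tree

variable {n : ℕ} {parent : Fin n → Fin n}

lemma isDesc_refl (v : Fin n) : isDesc parent v v := ⟨0, rfl⟩

lemma isDesc_parent_self (v : Fin n) : isDesc parent (parent v) v := ⟨1, rfl⟩

lemma isDesc_trans {a b c : Fin n} (hab : isDesc parent a b) (hbc : isDesc parent b c) :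
    isDesc parent a c := by
  obtain ⟨k, hk⟩ := hab
  obtain ⟨m, hm⟩ := hbc
  exact ⟨k + m, by rw [Function.iterate_add_apply, hm, hk]⟩

lemma isDesc_total_of_isDesc {v w x : Fin n} (hv : isDesc parent v x) (hw : isDesc parent w x) :
    isDesc parent v w ∨ isDesc parent w v := by
  obtain ⟨k, hk⟩ := hv
  obtain ⟨m, hm⟩ := hw
  rcases le_total k m with hkm | hmk
  · exact Or.inr ⟨m - k, by rw [← hk, ← Function.iterate_add_apply, Nat.sub_add_cancel hkm, hm]⟩
  · exact Or.inl ⟨k - m, by rw [← hm, ← Function.iterate_add_apply, Nat.sub_add_cancel hmk, hk]⟩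

lemma isDesc_parent_of_isDesc_of_ne {v c : Fin n} (h : isDesc parent v c) (hne : c ≠ v) :
    isDesc parent v (parent c) := by
  obtain ⟨_ | k, hk⟩ := h
  · exact absurd hk hne
  · exact ⟨k, by rwa [← Function.iterate_succ_apply]⟩

lemma eq_root_of_isPeriodicPt {r : Fin n} (hroot : parent r = r)
    (hreach : ∀ v, isDesc parent r v) {v : Fin n} {p : ℕ} (hp : 0 < p)
    (hv : Function.IsPeriodicPt parent p v) : v = r := by
  obtain ⟨m, hm⟩ := hreach v
  have hvv : parent^[(p * m - m) + m] v = v := by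
    rw [Nat.sub_add_cancel (Nat.le_mul_of_pos_left m hp)]
    exact hv.mul_const m
  rwa [Function.iterate_add_apply, hm, Function.iterate_fixed hroot, eq_comm] at hvv

lemma isDesc_antisymm {r : Fin n} (hroot : parent r = r) (hreach : ∀ v, isDesc parent r v)
    {v w : Fin n} (hvw : isDesc parent v w) (hwv : isDesc parent w v) : v = w := by
  obtain ⟨k, hk⟩ := hvw
  obtain ⟨l, hl⟩ := hwv
  rcases Nat.eq_zero_or_pos (k + l) with h0 | hpos
  · obtain rfl : k = 0 := by omega
    exact hk.symm
  · have hv : Function.IsPeriodicPt parent (k + l) v := by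
      change parent^[k + l] v = v
      rw [Function.iterate_add_apply, hl, hk]
    rw [← hl, eq_root_of_isPeriodicPt hroot hreach hpos hv, Function.iterate_fixed hroot]

lemma eq_of_isChild_of_isDesc {r : Fin n} (hroot : parent r = r)
    (hreach : ∀ v, isDesc parent r v) {u c c' : Fin n} (hc : isChild parent c u)
    (hc' : isChild parent c' u) (h : isDesc parent c c') : c = c' := by
  by_contra hne
  have hcu : isDesc parent c u := hc'.1 ▸ isDesc_parent_of_isDesc_of_ne h (Ne.symm hne)
  exact hc.2 (isDesc_antisymm hroot hreach hcu (hc.1 ▸ isDesc_parent_self c))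

lemma eq_of_isChild_of_isDesc_of_isDesc {r : Fin n} (hroot : parent r = r)
    (hreach : ∀ v, isDesc parent r v) {u c c' x : Fin n} (hc : isChild parent c u)
    (hc' : isChild parent c' u) (hx : isDesc parent c x) (hx' : isDesc parent c' x) : c = c' := by
  rcases isDesc_total_of_isDesc hx hx' with h | h
  · exact eq_of_isChild_of_isDesc hroot hreach hc hc' h
  · exact (eq_of_isChild_of_isDesc hroot hreach hc' hc h).symm

lemma isDesc_of_isDesc_of_not_isDesc {u c c' v x y : Fin n} (hc : parent c = u)
    (hc' : parent c' = u) (hx : isDesc parent c x) (hy : isDesc parent c' y)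
    (hvx : isDesc parent v x) (hvy : ¬ isDesc parent v y) : isDesc parent c v := by
  rcases isDesc_total_of_isDesc hx hvx with h | h
  · exact h
  · by_cases hcv : c = v
    · exact hcv ▸ isDesc_refl c
    · have hvu : isDesc parent v u := hc ▸ isDesc_parent_of_isDesc_of_ne h hcv
      have huc' : isDesc parent u c' := hc' ▸ isDesc_parent_self c'
      exact absurd (isDesc_trans (isDesc_trans hvu huc') hy) hvy

@[simp]
lemma mem_leafDesc {u v : Fin n} : v ∈ leafDesc parent u ↔ isDesc parent u v ∧ isLeaf parent v := by
  simp [leafDesc]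

lemma fnum_le_of_isDesc {v w : Fin n} (P : Finset (Fin n)) (h : isDesc parent w v) :
    fnum parent v P ≤ fnum parent w P :=
  card_le_card <| inter_subset_inter_left fun x hx => by
    rw [mem_leafDesc] at hx ⊢
    exact ⟨isDesc_trans h hx.1, hx.2⟩

end Tree

lemma card_insert_erase_inter_add {α : Type*} [DecidableEq α] {s t : Finset α} {a b : α}
    (ha : a ∉ s) (hb : b ∈ s) :
    #(insert a (s.erase b) ∩ t) + (if b ∈ t then 1 else 0) =
      #(s ∩ t) + (if a ∈ t then 1 else 0) := by
  have ha' : a ∉ (s ∩ t).erase b := fun h => ha (mem_inter.mp (mem_of_mem_erase h)).1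
  have herase : #((s ∩ t).erase b) + (if b ∈ t then 1 else 0) = #(s ∩ t) := by
    split_ifs with hbt
    · exact card_erase_add_one (mem_inter.mpr ⟨hb, hbt⟩)
    · rw [erase_eq_of_notMem fun h => hbt (mem_inter.mp h).2, add_zero]
  by_cases hat : a ∈ t
  · rw [insert_inter_of_mem hat, erase_inter, card_insert_of_notMem ha', if_pos hat]
    omega
  · rw [insert_inter_of_notMem hat, erase_inter, if_neg hat]
    omega

lemma card_insert_erase {α : Type*} [DecidableEq α] {s : Finset α} {a b : α} (ha : a ∉ s)
    (hb : b ∈ s) : #(insert a (s.erase b)) = #s := by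
  rw [card_insert_of_notMem fun h => ha (mem_of_mem_erase h), card_erase_add_one hb]

lemma not_lexLe_of_lexLt {d : ℕ} {x y : Fin d → ℕ} (h : lexLt x y) : ¬ lexLe y x := by
  obtain ⟨j, hj, hpre⟩ := h
  rintro (heq | ⟨j', hj', hpre'⟩)
  · rw [heq] at hj
    exact lt_irrefl _ hj
  · rcases lt_trichotomy j j' with h | rfl | h
    · have := hpre' j h; omega
    · omega
    · have := hpre j' h; omega

lemma lexLt_counts_of_drop_at_level {α : Type*} [Fintype α] {ρ b : ℕ} {f g : α → ℕ} (hb : b ≤ ρ)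
    (hchange : ∀ v, g v ≠ f v → f v ≤ b ∧ g v < b) {w : α} (hw : f w = b) (hgw : g w ≠ f w) :
    lexLt (fun i : Fin (ρ + 1) => #(univ.filter fun v => g v = ρ - i))
      (fun i : Fin (ρ + 1) => #(univ.filter fun v => f v = ρ - i)) := by
  refine ⟨⟨ρ - b, by omega⟩, ?_, fun i hi => ?_⟩
  · have hlevel : ρ - (ρ - b) = b := by omega
    simp only [hlevel]
    refine card_lt_card <| (ssubset_iff_of_subset fun v hv => ?_).mpr ⟨w, ?_, ?_⟩
    · simp only [mem_filter, mem_univ, true_and] at hv ⊢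
      by_contra hfv
      exact (hchange v (by omega)).2.ne hv
    · simpa using hw
    · simpa using fun hgw' => (hchange w hgw).2.ne hgw'
  · have hi' : (i : ℕ) < ρ - b := hi
    refine congrArg card (filter_congr fun v _ => ?_)
    by_cases hv : g v = f v
    · rw [hv]
    · have := hchange v hv
      omega

section Swap

variable {n : ℕ} {parent : Fin n → Fin n}

lemma fnum_swap_add {P : Finset (Fin n)} {ℓi ℓj : Fin n} (hℓi : ℓi ∉ P) (hℓj : ℓj ∈ P)
    (v : Fin n) :
    fnum parent v (insert ℓi (P.erase ℓj)) + (if ℓj ∈ leafDesc parent v then 1 else 0) =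
      fnum parent v P + (if ℓi ∈ leafDesc parent v then 1 else 0) :=
  card_insert_erase_inter_add hℓi hℓj

theorem lexLt_fagg_swap {r : Fin n} (hroot : parent r = r) (hreach : ∀ v, isDesc parent r v)
    {ρ : ℕ} {P : Finset (Fin n)} (hPcard : #P = ρ) {u ci cj : Fin n}
    (hci : isChild parent ci u) (hcj : isChild parent cj u)
    (himb : fnum parent ci P + 1 < fnum parent cj P) {ℓi ℓj : Fin n}
    (hℓi : ℓi ∈ leafDesc parent ci \ P) (hℓj : ℓj ∈ P ∩ leafDesc parent cj) :
    lexLt (fagg parent ρ (insert ℓi (P.erase ℓj))) (fagg parent ρ P) := by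
  obtain ⟨hℓi_ci, hℓi_P⟩ := mem_sdiff.mp hℓi
  obtain ⟨hℓj_P, hℓj_cj⟩ := mem_inter.mp hℓj
  have hne : ci ≠ cj := by
    rintro rfl
    omega
  have hℓi_cj : ℓi ∉ leafDesc parent cj := fun h =>
    hne (eq_of_isChild_of_isDesc_of_isDesc hroot hreach hci hcj
      (mem_leafDesc.mp hℓi_ci).1 (mem_leafDesc.mp h).1)
  have hℓj_ci : ℓj ∉ leafDesc parent ci := fun h =>
    hne (eq_of_isChild_of_isDesc_of_isDesc hroot hreach hci hcj
      (mem_leafDesc.mp h).1 (mem_leafDesc.mp hℓj_cj).1)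
  have below {c c' v ℓ ℓ' : Fin n} (hc : isChild parent c u) (hc' : isChild parent c' u)
      (hℓ : ℓ ∈ leafDesc parent c) (hℓ' : ℓ' ∈ leafDesc parent c') (hv : ℓ ∈ leafDesc parent v)
      (hv' : ℓ' ∉ leafDesc parent v) : fnum parent v P ≤ fnum parent c P := by
    rw [mem_leafDesc] at hℓ hℓ' hv
    refine fnum_le_of_isDesc P (isDesc_of_isDesc_of_not_isDesc hc.1 hc'.1 hℓ.1 hℓ'.1 hv.1 ?_)
    exact fun h => hv' (mem_leafDesc.mpr ⟨h, hℓ'.2⟩)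
  have hbρ : fnum parent cj P ≤ ρ := hPcard ▸ card_le_card inter_subset_left
  refine lexLt_counts_of_drop_at_level hbρ (fun v hv => ?_) (w := cj) rfl ?_
  · have hswap := fnum_swap_add (parent := parent) hℓi_P hℓj_P v
    have hℓj_pos : ℓj ∈ leafDesc parent v → 0 < fnum parent v P := fun h =>
      card_pos.mpr ⟨ℓj, mem_inter.mpr ⟨hℓj_P, h⟩⟩
    by_cases hi : ℓi ∈ leafDesc parent v <;> by_cases hj : ℓj ∈ leafDesc parent v <;>
      simp only [hi, hj, if_true, if_false] at hswap
    · omega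
    · have := below hci hcj hℓi_ci hℓj_cj hi hj
      omega
    · have := below hcj hci hℓj_cj hℓi_ci hj hi
      have := hℓj_pos hj
      omega
    · omega
  · have hswap := fnum_swap_add (parent := parent) hℓi_P hℓj_P cj
    simp only [hℓi_cj, hℓj_cj, if_true, if_false] at hswap
    omega

theorem balancedAt_of_lexMin {r : Fin n} (hroot : parent r = r)
    (hreach : ∀ v, isDesc parent r v) {ρ : ℕ} {Q : Finset (Fin n)} (hQ : Q ⊆ leaves parent)
    (hQcard : #Q = ρ)
    (hmin : ∀ Q' : Finset (Fin n), Q' ⊆ leaves parent → #Q' = ρ →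
      lexLe (fagg parent ρ Q) (fagg parent ρ Q')) (v : Fin n) :
    balancedAt parent v Q := by
  intro ci cj hci hcj hunf
  by_contra! himb
  obtain ⟨ℓi, hℓi_ci, hℓi_Q⟩ := exists_mem_notMem_of_card_lt_card hunf
  obtain ⟨ℓj, hℓj⟩ : (Q ∩ leafDesc parent cj).Nonempty :=
    card_pos.mp (by unfold fnum at himb; omega)
  have hℓi_Q' : ℓi ∉ Q := fun h => hℓi_Q (mem_inter.mpr ⟨h, hℓi_ci⟩)
  have hleaves : insert ℓi (Q.erase ℓj) ⊆ leaves parent :=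
    insert_subset (by simpa [leaves] using (mem_leafDesc.mp hℓi_ci).2)
      ((erase_subset _ _).trans hQ)
  have hcard : #(insert ℓi (Q.erase ℓj)) = ρ :=
    (card_insert_erase hℓi_Q' (mem_inter.mp hℓj).1).trans hQcard
  exact not_lexLe_of_lexLt
    (lexLt_fagg_swap hroot hreach hQcard hci hcj himb (mem_sdiff.mpr ⟨hℓi_ci, hℓi_Q'⟩) hℓj)
    (hmin _ hleaves hcard)

end Swap

theorem swap_improves_and_optimal_balanced_general {n ρ : ℕ} (parent : Fin n → Fin n)
    (r : Fin n) (hroot : parent r = r) (hreach : ∀ v, isDesc parent r v)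
    (P : Finset (Fin n)) (hPcard : P.card = ρ)
    (u ci cj : Fin n) (hci : isChild parent ci u) (hcj : isChild parent cj u)
    (himb : fnum parent ci P + 1 < fnum parent cj P)
    (ℓi ℓj : Fin n) (hℓi : ℓi ∈ leafDesc parent ci \ P)
    (hℓj : ℓj ∈ P ∩ leafDesc parent cj) :
    lexLt (fagg parent ρ (insert ℓi (P.erase ℓj))) (fagg parent ρ P) ∧
    (∀ Q : Finset (Fin n), Q ⊆ leaves parent → Q.card = ρ →
      (∀ Q' : Finset (Fin n), Q' ⊆ leaves parent → Q'.card = ρ →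
        lexLe (fagg parent ρ Q) (fagg parent ρ Q')) →
      ∀ v : Fin n, balancedAt parent v Q) :=
  ⟨lexLt_fagg_swap hroot hreach hPcard hci hcj himb hℓi hℓj,
    fun _ hQ hQcard hmin => balancedAt_of_lexMin hroot hreach hQ hQcard hmin⟩

/-- Swapping a replica from a heavy child to an unfilled light child strictly
improves the failure aggregate; consequently any lexico-minimum placement is
balanced. -/
theorem swap_improves_and_optimal_balanced {n ρ : ℕ} (parent : Fin n → Fin n)
    (r : Fin n) (hroot : parent r = r) (hreach : ∀ v, isDesc parent r v)
    (P : Finset (Fin n)) (hPleaves : P ⊆ leaves parent) (hPcard : P.card = ρ)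
    (u ci cj : Fin n) (hci : isChild parent ci u) (hcj : isChild parent cj u)
    (hunfilled : fnum parent ci P < (leafDesc parent ci).card)
    (himb : fnum parent ci P + 1 < fnum parent cj P)
    (ℓi ℓj : Fin n) (hℓi : ℓi ∈ leafDesc parent ci \ P)
    (hℓj : ℓj ∈ P ∩ leafDesc parent cj) :
    lexLt (fagg parent ρ (insert ℓi (P.erase ℓj))) (fagg parent ρ P) ∧
    (∀ Q : Finset (Fin n), Q ⊆ leaves parent → Q.card = ρ →
      (∀ Q' : Finset (Fin n), Q' ⊆ leaves parent → Q'.card = ρ →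
        lexLe (fagg parent ρ Q) (fagg parent ρ Q')) →
      ∀ v : Fin n, balancedAt parent v Q) :=
  swap_improves_and_optimal_balanced_general parent r hroot hreach P hPcard u ci cj hci hcj himb ℓi
    ℓj hℓi hℓj
end

section
/- Path-sum equivalence for greedy augmentation: let T be a rooted tree with root r and leaf set C, let P ⊆ C be a partial placement with |P| < ρ, and let u, v ∈ C \ P be distinct candidates. Then s⃗(r⇝u, P) ≤_L s⃗(r⇝v, P) if and only if f⃗(P ∪ {u}) ≤_L f⃗(P ∪ {v}), where s⃗(S, P) is the vector whose i-th entry counts the nodes x ∈ S with f(x, P) = ρ − i, and r⇝u is the set of nodes on the path from r to u (inclusive). -/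
attribute [local instance] Classical.propDecidable

/-- The set of vertices on the path from the root to `u`, i.e. the ancestors of `u`. -/
noncomputable def pathTo {n : ℕ} (parent : Fin n → Fin n) (u : Fin n) : Finset (Fin n) :=
  Finset.univ.filter (fun x => isDesc parent x u)

/-- `s⃗(S, P)`: entry `i` counts the vertices `x ∈ S` with `f(x,P) = ρ - i`. -/
noncomputable def svec {n : ℕ} (parent : Fin n → Fin n) (ρ : ℕ) (S : Finset (Fin n))
    (P : Finset (Fin n)) : Fin (ρ + 1) → ℕ :=
  fun i => (S.filter (fun x => fnum parent x P = ρ - (i : ℕ))).card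


/-!
Adding a leaf `u` to `P` raises the failure number of exactly the vertices on `r ⇝ u`, each by
one. Hence, writing `s_u(k)` for the number of such vertices at level `ρ - k`, the aggregates
satisfy `f⃗(P ∪ {u})ₖ + s_u(k) = f⃗(P)ₖ + s_u(k + 1)`: the new aggregate is the old one plus a
discrete derivative of `s_u`. Since `s_u(0) = s_v(0) = 0` (as `|P| < ρ`), the vectors
`f⃗(P ∪ {u})` and `f⃗(P ∪ {v})` agree on `[0, j)` iff `s_u` and `s_v` agree on `[0, j]`, and
they then compare at `j` as `s_u` and `s_v` compare at `j + 1`; so the two lexicographic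
comparisons coincide.
-/

def LexLeOn (d : ℕ) (x y : ℕ → ℕ) : Prop :=
  ∀ j < d, (∀ i < j, x i = y i) → x j ≤ y j

theorem lexLe_iff_lexLeOn {d : ℕ} (x y : ℕ → ℕ) :
    lexLe (fun i : Fin d => x i) (fun i => y i) ↔ LexLeOn d x y := by
  constructor
  · rintro (hxy | ⟨j₀, hlt, hagree⟩) j hj hbelow
    · exact (congrFun hxy ⟨j, hj⟩).le
    · rcases lt_trichotomy j j₀ with h | rfl | h
      · exact (hagree ⟨j, hj⟩ h).le
      · exact hlt.le
      · exact absurd (hbelow j₀ h) hlt.ne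
  · intro hle
    by_cases hxy : ∃ j, j < d ∧ x j ≠ y j
    · have hj := Nat.find_spec hxy
      have hbelow : ∀ i < Nat.find hxy, x i = y i := fun i hi =>
        not_not.1 fun hne => Nat.find_min hxy hi ⟨hi.trans hj.1, hne⟩
      exact Or.inr ⟨⟨_, hj.1⟩, (hle _ hj.1 hbelow).lt_of_ne hj.2, fun i hi => hbelow i hi⟩
    · push Not at hxy
      exact Or.inl (funext fun i => hxy i i.isLt)

theorem lexLeOn_succ_iff_of_eq_zero {d : ℕ} {x y : ℕ → ℕ} (hx : x d = 0) :
    LexLeOn (d + 1) x y ↔ LexLeOn d x y := by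
  simp only [LexLeOn, Nat.forall_lt_succ_right, hx, zero_le, implies_true, and_true]

theorem lexLeOn_succ_iff_of_telescope {a b A B c : ℕ → ℕ}
    (ha : ∀ k, A k + a k = c k + a (k + 1)) (hb : ∀ k, B k + b k = c k + b (k + 1))
    (h₀ : a 0 = b 0) (d : ℕ) :
    LexLeOn (d + 1) a b ↔ LexLeOn d A B := by
  have step_eq : ∀ k, a k = b k → (A k = B k ↔ a (k + 1) = b (k + 1)) := fun k _ => by
    have := ha k; have := hb k; omega
  have step_le : ∀ k, a k = b k → (A k ≤ B k ↔ a (k + 1) ≤ b (k + 1)) := fun k _ => by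
    have := ha k; have := hb k; omega
  have agree_iff : ∀ j, (∀ i < j, A i = B i) ↔ ∀ i < j + 1, a i = b i := by
    intro j
    induction j with
    | zero => simp [h₀]
    | succ j ih =>
      rw [Nat.forall_lt_succ_right, ih, Nat.forall_lt_succ_right (n := j + 1)]
      exact and_congr_right fun hagree => step_eq j (hagree j j.lt_succ_self)
  unfold LexLeOn
  rw [Nat.forall_lt_succ_left, and_iff_right fun _ => h₀.le]
  refine forall₂_congr fun j _ => ?_
  rw [agree_iff]
  exact imp_congr_right fun hagree => (step_le j (hagree j j.lt_succ_self)).symm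

section LevelCount

variable {n : ℕ} (parent : Fin n → Fin n)

/-- Written `fnum + k = ρ` rather than `fnum = ρ - k`, so that it vanishes for `k > ρ`. -/
noncomputable def levelCount (ρ : ℕ) (S P : Finset (Fin n)) (k : ℕ) : ℕ :=
  (S.filter fun x => fnum parent x P + k = ρ).card

theorem svec_eq_levelCount (ρ : ℕ) (S P : Finset (Fin n)) :
    svec parent ρ S P = fun i : Fin (ρ + 1) => levelCount parent ρ S P i := by
  funext i
  refine congrArg Finset.card (Finset.filter_congr fun x _ => ?_)
  have := i.isLt
  omega

theorem fagg_eq_levelCount (ρ : ℕ) (P : Finset (Fin n)) :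
    fagg parent ρ P = fun i : Fin (ρ + 1) => levelCount parent ρ Finset.univ P i :=
  svec_eq_levelCount parent ρ Finset.univ P

theorem levelCount_zero_of_card_lt {ρ : ℕ} (S : Finset (Fin n)) {P : Finset (Fin n)}
    (hP : P.card < ρ) : levelCount parent ρ S P 0 = 0 := by
  refine Finset.card_eq_zero.2 (Finset.filter_eq_empty_iff.2 fun x _ => ?_)
  have : fnum parent x P ≤ P.card := Finset.card_le_card Finset.inter_subset_left
  omega

theorem levelCount_of_lt {ρ k : ℕ} (S P : Finset (Fin n)) (hk : ρ < k) :
    levelCount parent ρ S P k = 0 :=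
  Finset.card_eq_zero.2 (Finset.filter_eq_empty_iff.2 fun _ _ => by omega)

theorem fnum_insert {u : Fin n} (hu : isLeaf parent u) {P : Finset (Fin n)} (huP : u ∉ P)
    (x : Fin n) :
    fnum parent x (insert u P) =
      if isDesc parent x u then fnum parent x P + 1 else fnum parent x P := by
  unfold fnum
  split_ifs with h
  · rw [Finset.insert_inter_of_mem (by simp [leafDesc, h, hu]),
      Finset.card_insert_of_notMem (by simp [huP])]
  · rw [Finset.insert_inter_of_notMem (by simp [leafDesc, h])]

theorem levelCount_insert_add {ρ : ℕ} {u : Fin n} (hu : isLeaf parent u) {P : Finset (Fin n)}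
    (huP : u ∉ P) (k : ℕ) :
    levelCount parent ρ Finset.univ (insert u P) k + levelCount parent ρ (pathTo parent u) P k =
      levelCount parent ρ Finset.univ P k + levelCount parent ρ (pathTo parent u) P (k + 1) := by
  simp only [levelCount, pathTo, Finset.filter_filter, Finset.card_filter,
    ← Finset.sum_add_distrib]
  refine Finset.sum_congr rfl fun x _ => ?_
  rw [fnum_insert parent hu huP x]
  by_cases h : isDesc parent x u <;> simp only [h, if_true, if_false, true_and, false_and]
  all_goals split_ifs <;> omega

end LevelCount

theorem path_sum_equivalence_general {n ρ : ℕ} (parent : Fin n → Fin n)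
    (P : Finset (Fin n)) (hPcard : P.card < ρ)
    (u v : Fin n) (hu : u ∈ leaves parent \ P) (hv : v ∈ leaves parent \ P) :
    lexLe (svec parent ρ (pathTo parent u) P) (svec parent ρ (pathTo parent v) P) ↔
      lexLe (fagg parent ρ (insert u P)) (fagg parent ρ (insert v P)) := by
  obtain ⟨huL, huP⟩ := Finset.mem_sdiff.1 hu
  obtain ⟨hvL, hvP⟩ := Finset.mem_sdiff.1 hv
  rw [svec_eq_levelCount, svec_eq_levelCount, fagg_eq_levelCount, fagg_eq_levelCount,
    lexLe_iff_lexLeOn, lexLe_iff_lexLeOn,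
    ← lexLeOn_succ_iff_of_eq_zero (levelCount_of_lt parent _ P (Nat.lt_succ_self ρ))]
  refine lexLeOn_succ_iff_of_telescope
    (levelCount_insert_add parent (Finset.mem_filter.1 huL).2 huP)
    (levelCount_insert_add parent (Finset.mem_filter.1 hvL).2 hvP) ?_ _
  rw [levelCount_zero_of_card_lt parent _ hPcard, levelCount_zero_of_card_lt parent _ hPcard]

/-- Path-sum equivalence for greedy augmentation:
`s⃗(r⇝u, P) ≤_L s⃗(r⇝v, P)` iff `f⃗(P ∪ {u}) ≤_L f⃗(P ∪ {v})`. -/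
theorem path_sum_equivalence {n ρ : ℕ} (parent : Fin n → Fin n)
    (r : Fin n) (hroot : parent r = r) (hreach : ∀ w, isDesc parent r w)
    (P : Finset (Fin n)) (hPleaves : P ⊆ leaves parent) (hPcard : P.card < ρ)
    (u v : Fin n) (hu : u ∈ leaves parent \ P) (hv : v ∈ leaves parent \ P)
    (huv : u ≠ v) :
    lexLe (svec parent ρ (pathTo parent u) P) (svec parent ρ (pathTo parent v) P) ↔
      lexLe (fagg parent ρ (insert u P)) (fagg parent ρ (insert v P)) :=
  path_sum_equivalence_general parent P hPcard u v hu hv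
end

section
/- Adding a fresh replica shifts the path contribution: in a rooted tree with root r, if P ⊆ C is a placement with |P| < ρ and u ∈ C \ P, then s⃗(r⇝u, P ∪ {u}) equals the left shift of s⃗(r⇝u, P); that is, s⃗(r⇝u, P ∪ {u}) = ŝ⃗(r⇝u, P), where v̂ shifts entries one position left and appends zero. -/
attribute [local instance] Classical.propDecidable

/-- Left shift of an `ℕ`-vector: `⟨a_0, ..., a_ρ⟩ ↦ ⟨a_1, ..., a_ρ, 0⟩`. -/
def lshift {ρ : ℕ} (a : Fin (ρ + 1) → ℕ) : Fin (ρ + 1) → ℕ :=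
  fun i => if h : (i : ℕ) + 1 < ρ + 1 then a ⟨(i : ℕ) + 1, h⟩ else 0

lemma mem_leafDesc_of_mem_pathTo {n : ℕ} {parent : Fin n → Fin n} {u x : Fin n}
    (hu : u ∈ leaves parent) (hx : x ∈ pathTo parent u) : u ∈ leafDesc parent x := by
  simp only [leaves, pathTo, leafDesc, Finset.mem_filter, Finset.mem_univ, true_and] at hu hx ⊢
  exact ⟨hx, hu⟩

lemma fnum_insert_of_mem_pathTo {n : ℕ} {parent : Fin n → Fin n} {u x : Fin n}
    {P : Finset (Fin n)} (hu : u ∈ leaves parent) (huP : u ∉ P) (hx : x ∈ pathTo parent u) :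
    fnum parent x (insert u P) = fnum parent x P + 1 := by
  rw [fnum, fnum, Finset.insert_inter_of_mem (mem_leafDesc_of_mem_pathTo hu hx),
    Finset.card_insert_of_notMem fun h => huP (Finset.mem_inter.mp h).1]

lemma svec_eq_lshift_of_fnum_succ {n ρ : ℕ} {parent : Fin n → Fin n} {S P Q : Finset (Fin n)}
    (hQ : ∀ x ∈ S, fnum parent x Q = fnum parent x P + 1) :
    svec parent ρ S Q = lshift (svec parent ρ S P) := by
  funext i
  unfold svec lshift
  split_ifs with hi
  · congr 1
    refine Finset.filter_congr fun x hx => ?_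
    rw [hQ x hx]
    dsimp only
    omega
  · refine Finset.card_eq_zero.mpr (Finset.filter_eq_empty_iff.mpr fun x hx => ?_)
    rw [hQ x hx]
    omega

theorem path_contribution_shift_general {n ρ : ℕ} (parent : Fin n → Fin n)
    (P : Finset (Fin n))
    (u : Fin n) (hu : u ∈ leaves parent \ P) :
    svec parent ρ (pathTo parent u) (insert u P) =
      lshift (svec parent ρ (pathTo parent u) P) := by
  obtain ⟨huL, huP⟩ := Finset.mem_sdiff.mp hu
  exact svec_eq_lshift_of_fnum_succ fun _ hx => fnum_insert_of_mem_pathTo huL huP hx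

/-- Adding a fresh replica at leaf `u` shifts the contribution of the root-to-`u`
path: `s⃗(r⇝u, P ∪ {u}) = ŝ⃗(r⇝u, P)`. -/
theorem path_contribution_shift {n ρ : ℕ} (parent : Fin n → Fin n)
    (r : Fin n) (hroot : parent r = r) (hreach : ∀ w, isDesc parent r w)
    (P : Finset (Fin n)) (hPleaves : P ⊆ leaves parent) (hPcard : P.card < ρ)
    (u : Fin n) (hu : u ∈ leaves parent \ P) :
    svec parent ρ (pathTo parent u) (insert u P) =
      lshift (svec parent ρ (pathTo parent u) P) :=
  path_contribution_shift_general parent P u hu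
end

section
/- Invariants of the labeling loop imply correct classification: suppose at termination of the labeling algorithm, the children of a node are partitioned into sets F (filled) and U (unfilled) with U ≠ ∅, satisfying max_{c∈F} |C_c| ≤ (r − ∑_{c∈F}|C_c|)/|U| < min_{c∈U} |C_c|, where r is the total number of replicas. Then in any balanced assignment of r replicas to the children (nonnegative integers n_c with n_c ≤ |C_c|, ∑ n_c = r, and the balancing condition: n_c < |C_c| implies n_{c'} ≤ n_c + 1 for all c'), every child c ∈ F satisfies n_c = |C_c|. -/
/-!
If a filled child `c ∈ F` were short of its capacity, balancing would cap every child's load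
at `cap c`, so the unfilled children together would receive at most `cap c * |U| ≤ r − σ(F)`
replicas, while the filled ones receive strictly fewer than `σ(F)`: fewer than `r` in total.
-/

def IsBalanced {ι : Type*} (cap nn : ι → ℕ) : Prop :=
  ∀ c c', nn c < cap c → nn c' ≤ nn c + 1

namespace IsBalanced

variable {ι : Type*} {cap nn : ι → ℕ}

theorem le_cap_of_lt_cap (hbal : IsBalanced cap nn) {c : ι} (hc : nn c < cap c) (c' : ι) :
    nn c' ≤ cap c :=
  (hbal c c' hc).trans hc

theorem sum_le_cap_mul_card (hbal : IsBalanced cap nn) {c : ι} (hc : nn c < cap c)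
    (s : Finset ι) : ∑ x ∈ s, nn x ≤ cap c * s.card := by
  simpa [mul_comm] using Finset.sum_le_card_nsmul s nn (cap c) fun x _ ↦ hbal.le_cap_of_lt_cap hc x

end IsBalanced

theorem labeling_invariants_filled_general {ι : Type*} [Fintype ι] [DecidableEq ι]
    (cap : ι → ℕ) (F U : Finset ι) (hpart : F ∪ U = Finset.univ)
    (hdisj : Disjoint F U) (r : ℕ)
    (hσ : ∑ c ∈ F, cap c ≤ r)
    (hmax : ∀ c ∈ F, cap c * U.card ≤ r - ∑ c' ∈ F, cap c') :
    ∀ nn : ι → ℕ, (∀ c, nn c ≤ cap c) → (∑ c, nn c) = r →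
      (∀ c c' : ι, nn c < cap c → nn c' ≤ nn c + 1) →
      ∀ c ∈ F, nn c = cap c := by
  intro nn hle hsum hbal c hcF
  by_contra hne
  have hlt : nn c < cap c := lt_of_le_of_ne (hle c) hne
  have hF : ∑ x ∈ F, nn x < ∑ x ∈ F, cap x :=
    Finset.sum_lt_sum (fun x _ ↦ hle x) ⟨c, hcF, hlt⟩
  have hU : ∑ x ∈ U, nn x ≤ r - ∑ x ∈ F, cap x :=
    (IsBalanced.sum_le_cap_mul_card hbal hlt U).trans (hmax c hcF)
  have hsplit : ∑ x ∈ F, nn x + ∑ x ∈ U, nn x = r := by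
    rw [← Finset.sum_union hdisj, hpart, hsum]
  omega

/-- Invariants of the labeling loop imply correct classification: if the
children are partitioned into `F` (filled) and `U` (unfilled) with `U ≠ ∅` and
`max_{c∈F} cap c ≤ (r − σ(F)) / |U| < min_{c∈U} cap c` (stated multiplied out),
then in any balanced assignment of `r` replicas respecting capacities, every
child in `F` receives exactly its capacity. -/
theorem labeling_invariants_filled {ι : Type*} [Fintype ι] [DecidableEq ι]
    (cap : ι → ℕ) (F U : Finset ι) (hpart : F ∪ U = Finset.univ)
    (hdisj : Disjoint F U) (hUne : U.Nonempty) (r : ℕ)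
    (hσ : ∑ c ∈ F, cap c ≤ r)
    (hmax : ∀ c ∈ F, cap c * U.card ≤ r - ∑ c' ∈ F, cap c')
    (hmin : ∀ c ∈ U, r - ∑ c' ∈ F, cap c' < cap c * U.card) :
    ∀ nn : ι → ℕ, (∀ c, nn c ≤ cap c) → (∑ c, nn c) = r →
      (∀ c c' : ι, nn c < cap c → nn c' ≤ nn c + 1) →
      ∀ c ∈ F, nn c = cap c :=
  labeling_invariants_filled_general cap F U hpart hdisj r hσ hmax
end
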